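/- The function K_β(θ) = (1/π)·θ^{β-1} sin(βπ)/(θ^{2β} + 2θ^β cos(βπ) + 1), for β ∈ (0,1), is nonnegative on (0,∞) and satisfies ∫₀^∞ K_β(θ) dθ = 1. -/

import Mathlib

/-! Writing `φ = βπ` and substituting `u = θ^β`, the integral of `K_β` becomes
`(sin φ / φ) ∫₀^∞ du / (u² + 2u cos φ + 1)`. Completing the square,
`u² + 2u cos φ + 1 = (u + cos φ)² + sin² φ`, which also gives nonnegativity, and the
arctangent antiderivative evaluates the last integral to `φ / sin φ`, since
`arctan (cot φ) = π/2 - φ`. -/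

noncomputable def Kβ (β θ : ℝ) : ℝ :=
  (1 / Real.pi) * θ ^ (β - 1) * Real.sin (β * Real.pi) /
    (θ ^ (2 * β) + 2 * θ ^ β * Real.cos (β * Real.pi) + 1)

open Real MeasureTheory Set Filter Topology

lemma integral_Ioi_inv_add_sq_add_sq (c : ℝ) {s : ℝ} (hs : 0 < s) :
    ∫ u in Ioi (0:ℝ), ((u + c) ^ 2 + s ^ 2)⁻¹ = (π / 2 - arctan (c / s)) / s := by
  have hderiv (x : ℝ) :
      HasDerivAt (fun u => s⁻¹ * arctan ((u + c) / s)) ((x + c) ^ 2 + s ^ 2)⁻¹ x := by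
    have hlin : HasDerivAt (fun u : ℝ => (u + c) / s) (1 / s) x := by
      simpa using ((hasDerivAt_id x).add_const c).div_const s
    refine (((hasDerivAt_arctan _).comp x hlin).const_mul s⁻¹).congr_deriv ?_
    field_simp
    ring
  have hlim : Tendsto (fun u => s⁻¹ * arctan ((u + c) / s)) atTop (𝓝 (s⁻¹ * (π / 2))) := by
    have hlin : Tendsto (fun u : ℝ => (u + c) / s) atTop atTop :=
      (tendsto_atTop_add_const_right atTop c tendsto_id).atTop_div_const hs
    exact ((tendsto_arctan_atTop.mono_right nhdsWithin_le_nhds).comp hlin).const_mul _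
  rw [integral_Ioi_of_hasDerivAt_of_nonneg' (fun x _ => hderiv x) (fun x _ => by positivity) hlim,
    zero_add]
  field_simp

lemma arctan_cos_div_sin {φ : ℝ} (h0 : 0 < φ) (hπ : φ < π) :
    arctan (cos φ / sin φ) = π / 2 - φ := by
  rw [← sin_pi_div_two_sub φ, ← cos_pi_div_two_sub φ, ← tan_eq_sin_div_cos,
    arctan_tan (by linarith) (by linarith)]

lemma sq_add_two_mul_cos_add_one (u φ : ℝ) :
    u ^ 2 + 2 * u * cos φ + 1 = (u + cos φ) ^ 2 + sin φ ^ 2 := by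
  linear_combination -sin_sq_add_cos_sq φ

lemma integral_Ioi_inv_sq_add_two_mul_cos_add_one {φ : ℝ} (h0 : 0 < φ) (hπ : φ < π) :
    ∫ u in Ioi (0:ℝ), (u ^ 2 + 2 * u * cos φ + 1)⁻¹ = φ / sin φ := by
  have hsin : 0 < sin φ := sin_pos_of_pos_of_lt_pi h0 hπ
  simp_rw [sq_add_two_mul_cos_add_one]
  rw [integral_Ioi_inv_add_sq_add_sq _ hsin, arctan_cos_div_sin h0 hπ]
  ring

lemma Kβ_eq_of_nonneg (β : ℝ) {θ : ℝ} (hθ : 0 ≤ θ) :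
    Kβ β θ = 1 / π * θ ^ (β - 1) * sin (β * π) /
      ((θ ^ β) ^ 2 + 2 * θ ^ β * cos (β * π) + 1) := by
  rw [Kβ, mul_comm 2 β, ← Nat.cast_ofNat, rpow_mul_natCast hθ]

lemma Kβ_nonneg {β θ : ℝ} (hβ : β ∈ Icc (0:ℝ) 1) (hθ : 0 ≤ θ) : 0 ≤ Kβ β θ := by
  have hsin : 0 ≤ sin (β * π) :=
    sin_nonneg_of_nonneg_of_le_pi (mul_nonneg hβ.1 pi_pos.le) (by nlinarith [pi_pos, hβ.2])
  rw [Kβ_eq_of_nonneg β hθ, sq_add_two_mul_cos_add_one]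
  positivity

theorem K_nonneg_and_integral_one (β : ℝ) (hβ : β ∈ Set.Ioo (0:ℝ) 1) :
    (∀ θ ∈ Set.Ioi (0:ℝ), 0 ≤ Kβ β θ) ∧ ∫ θ in Set.Ioi (0:ℝ), Kβ β θ = 1 := by
  obtain ⟨hβ0, hβ1⟩ := hβ
  refine ⟨fun θ hθ => Kβ_nonneg (Ioo_subset_Icc_self ⟨hβ0, hβ1⟩) (le_of_lt hθ), ?_⟩
  have hφ0 : 0 < β * π := mul_pos hβ0 pi_pos
  have hφπ : β * π < π := by nlinarith [pi_pos]
  have hsin : 0 < sin (β * π) := sin_pos_of_pos_of_lt_pi hφ0 hφπ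
  have hsubst : ∫ θ in Ioi (0:ℝ), Kβ β θ = ∫ θ in Ioi (0:ℝ), (β * θ ^ (β - 1)) •
      (sin (β * π) / (β * π) * ((θ ^ β) ^ 2 + 2 * θ ^ β * cos (β * π) + 1)⁻¹) := by
    refine setIntegral_congr_fun measurableSet_Ioi fun θ hθ => ?_
    rw [Kβ_eq_of_nonneg β (le_of_lt hθ), smul_eq_mul]
    field_simp
  rw [hsubst, integral_comp_rpow_Ioi_of_pos (g := fun u =>
      sin (β * π) / (β * π) * (u ^ 2 + 2 * u * cos (β * π) + 1)⁻¹) hβ0,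
    integral_const_mul, integral_Ioi_inv_sq_add_two_mul_cos_add_one hφ0 hφπ]
  field_simp
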